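/- arXiv:1011.5215 — 3 statements merged into one kernel-verified Lean document; each statement's English description precedes it below -/
import Mathlib

section
/- Let C be a family of subsets of [n] and a ⊆ [n]. For any k ≥ 1, a belongs to C if and only if the number of k-tuples (c_1,...,c_k) of elements of C with c_1 ∪ ... ∪ c_k = a is odd. -/
/-!
Swapping the first two entries of a `(k + 2)`-tuple is an involution on the coverings of `a`,
so their number has the parity of its fixed points, the tuples with `c 0 = c 1`. As `⊔` is
idempotent, dropping the repeated entry identifies these with the `(k + 1)`-coverings of `a`.
Hence the parity of the number of `k`-coverings does not depend on `k ≥ 1`, and for `k = 1`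
there is exactly one covering if `a ∈ C` and none otherwise.
-/

open Finset

theorem Function.Involutive.card_filter_fixed_modEq_two {α : Type*} [DecidableEq α]
    {s : Finset α} {g : α → α} (hg : Function.Involutive g) (hs : ∀ x ∈ s, g x ∈ s) :
    #{x ∈ s | g x = x} ≡ #s [MOD 2] := by
  have hmoved : ∑ x ∈ s with g x ≠ x, (1 : ZMod 2) = 0 := by
    refine sum_involution (fun x _ => g x) (fun _ _ => by decide) (fun x hx _ => ?_)
      (fun x hx => ?_) (fun x _ => hg x) <;> simp only [mem_filter] at hx ⊢
    · exact hx.2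
    · exact ⟨hs x hx.1, by rw [hg x]; exact Ne.symm hx.2⟩
  rw [← ZMod.natCast_eq_natCast_iff,
    ← card_filter_add_card_filter_not (s := s) (fun x => g x = x)]
  simpa using hmoved

theorem Finset.sup_univ_comp_equiv {α ι : Type*} [SemilatticeSup α] [OrderBot α] [Fintype ι]
    (c : ι → α) (e : ι ≃ ι) : univ.sup (c ∘ e) = univ.sup c :=
  (sup_map univ e.toEmbedding c).symm.trans (by rw [map_univ_equiv])

theorem Fin.sup_univ_cons {α : Type*} [SemilatticeSup α] [OrderBot α] {k : ℕ} (x : α)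
    (d : Fin k → α) : univ.sup (Fin.cons x d : Fin (k + 1) → α) = x ⊔ univ.sup d := by
  simp [Fin.univ_succ]

theorem Equiv.comp_swap_eq_self_iff {α β : Type*} [DecidableEq α] (f : α → β) (i j : α) :
    f ∘ Equiv.swap i j = f ↔ f i = f j := by
  refine ⟨fun h => by simpa using congrFun h j, fun h => funext fun x => ?_⟩
  rw [Function.comp_apply, Equiv.swap_apply_def]
  split_ifs <;> simp_all

section Coverings

variable {α : Type*} [DecidableEq α] [SemilatticeSup α] [OrderBot α]

def coverings (C : Finset α) (k : ℕ) (a : α) : Finset (Fin k → α) :=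
  {c ∈ Fintype.piFinset fun _ => C | univ.sup c = a}

variable {C : Finset α} {a : α}

theorem coverings_one : coverings C 1 a = if a ∈ C then {fun _ => a} else ∅ := by
  have hsup (c : Fin 1 → α) : univ.sup c = c 0 := by simp [univ_unique]
  ext c
  split_ifs with ha <;>
    simp only [coverings, mem_filter, Fintype.mem_piFinset, Fin.forall_fin_one, hsup,
      mem_singleton, funext_iff, notMem_empty, iff_false, not_and]
  · exact ⟨And.right, fun h => ⟨h ▸ ha, h⟩⟩
  · exact fun hc h => ha (h ▸ hc)

theorem card_coverings_one : #(coverings C 1 a) = if a ∈ C then 1 else 0 := by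
  rw [coverings_one]
  split_ifs <;> rfl

theorem cons_head_mem_coverings_iff {k : ℕ} {d : Fin (k + 1) → α} :
    (Fin.cons (d 0) d : Fin (k + 2) → α) ∈ coverings C (k + 2) a ↔
      d ∈ coverings C (k + 1) a := by
  have hle : d 0 ≤ univ.sup d := le_sup (mem_univ 0)
  simp only [coverings, mem_filter, Fintype.mem_piFinset, Fin.forall_fin_succ (n := k + 1),
    Fin.cons_zero, Fin.cons_succ, Fin.sup_univ_cons, sup_eq_right.2 hle]
  exact and_congr_left fun _ => and_iff_right_of_imp fun h => h 0

theorem card_coverings_succ_succ_modEq (k : ℕ) :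
    #(coverings C (k + 2) a) ≡ #(coverings C (k + 1) a) [MOD 2] := by
  have hswap : Function.Involutive fun c : Fin (k + 2) → α => c ∘ Equiv.swap 0 1 :=
    fun c => funext fun i => by simp
  have hmem : ∀ c ∈ coverings C (k + 2) a, c ∘ Equiv.swap 0 1 ∈ coverings C (k + 2) a := by
    simp only [coverings, mem_filter, Fintype.mem_piFinset, Function.comp_apply,
      sup_univ_comp_equiv]
    exact fun c hc => ⟨fun i => hc.1 _, hc.2⟩
  have hfixed :
      #{c ∈ coverings C (k + 2) a | c ∘ Equiv.swap 0 1 = c} = #(coverings C (k + 1) a) := by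
    have hcons {c : Fin (k + 2) → α} (hc : c 0 = c 1) :
        Fin.cons (Fin.tail c 0) (Fin.tail c) = c :=
      (congrArg (Fin.cons · _) hc.symm).trans (Fin.cons_self_tail c)
    refine card_nbij' Fin.tail (fun d => Fin.cons (d 0) d) ?_ ?_ ?_ ?_
    · intro c hc
      simp only [coe_filter, Set.mem_ofPred_eq, Equiv.comp_swap_eq_self_iff] at hc
      rw [← hcons hc.2, cons_head_mem_coverings_iff] at hc
      exact hc.1
    · intro d hd
      simp only [coe_filter, Set.mem_ofPred_eq, Equiv.comp_swap_eq_self_iff]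
      exact ⟨cons_head_mem_coverings_iff.2 hd, rfl⟩
    · intro c hc
      simp only [coe_filter, Set.mem_ofPred_eq, Equiv.comp_swap_eq_self_iff] at hc
      exact hcons hc.2
    · intro d _
      exact Fin.tail_cons _ _
  exact hfixed ▸ (hswap.card_filter_fixed_modEq_two hmem).symm

theorem card_coverings_modEq_two :
    ∀ k, #(coverings C (k + 1) a) ≡ if a ∈ C then 1 else 0 [MOD 2]
  | 0 => by rw [card_coverings_one]
  | k + 1 => (card_coverings_succ_succ_modEq k).trans (card_coverings_modEq_two k)

end Coverings

/-- Let `C` be a family of subsets of `[n]` and `a ⊆ [n]`. For any `k ≥ 1`,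
`a ∈ C` iff the number of `k`-tuples `(c_1,...,c_k)` of elements of `C` with
`c_1 ∪ ... ∪ c_k = a` is odd. -/
theorem mem_iff_odd_coverings (n : ℕ) (C : Finset (Finset (Fin n)))
    (a : Finset (Fin n)) (k : ℕ) (hk : 1 ≤ k) :
    a ∈ C ↔ Odd ((Finset.univ.filter
      (fun c : Fin k → Finset (Fin n) =>
        (∀ i, c i ∈ C) ∧ Finset.univ.sup c = a)).card) := by
  obtain ⟨k, rfl⟩ := Nat.exists_eq_add_of_le' hk
  have hcov : univ.filter (fun c : Fin (k + 1) → Finset (Fin n) =>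
      (∀ i, c i ∈ C) ∧ univ.sup c = a) = coverings C (k + 1) a := by
    ext c
    simp [coverings]
  have hparity := card_coverings_modEq_two (C := C) (a := a) k
  rw [hcov, Nat.odd_iff]
  split_ifs at hparity with ha
  · exact iff_of_true ha hparity
  · exact iff_of_false ha (by rw [hparity]; decide)
end

section
/- The set of operators { x^a ∂^b : a, b ⊆ [n] } is linearly independent over Z_2 in the endomorphism algebra of the space of functions Z_2^n → Z_2, and hence the Z_2-algebra generated by the multiplication operators X_1,...,X_n and the Boolean derivatives ∂_1,...,∂_n is the full endomorphism algebra End_{Z_2}(M(Z_2^n, Z_2)), which has dimension 2^{2n}. -/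
open Finset

/-- The space of all functions `Z_2^n → Z_2`. -/
abbrev V (n : ℕ) : Type := (Fin n → ZMod 2) → ZMod 2

/-- Indicator vector of a subset of `[n]`, identifying `P[n]` with `Z_2^n`. -/
def ind {n : ℕ} (a : Finset (Fin n)) : Fin n → ZMod 2 :=
  fun i => if i ∈ a then 1 else 0

/-- `m^a`: the indicator function of the single point `a`. -/
def mFun {n : ℕ} (a : Finset (Fin n)) : V n :=
  fun b => if b = ind a then 1 else 0

/-- `x^a`: the monomial function, `x^a(b) = 1` iff `a ⊆ b`. -/
def xFun {n : ℕ} (a : Finset (Fin n)) : V n :=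
  fun b => if ∀ i ∈ a, b i = 1 then 1 else 0

/-- `w^a = ∏_{i ∈ a} (x_i + 1)`: `w^a(b) = 1` iff `b ⊆ [n] \ a`. -/
def wFun {n : ℕ} (a : Finset (Fin n)) : V n :=
  fun b => if ∀ i ∈ a, b i = 0 then 1 else 0

/-- The shift operator `s_i`, `(s_i f)(x) = f(x + e_i)`. -/
def shiftOp {n : ℕ} (i : Fin n) : Module.End (ZMod 2) (V n) where
  toFun f := fun x => f (x + Pi.single i 1)
  map_add' f g := rfl
  map_smul' c f := by funext x; rfl

/-- The Boolean partial derivative `∂_i`, `(∂_i f)(x) = f(x + e_i) + f(x)`. -/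
def derivOp {n : ℕ} (i : Fin n) : Module.End (ZMod 2) (V n) where
  toFun f := fun x => f (x + Pi.single i 1) + f x
  map_add' f g := by
    funext x
    show (f + g) _ + (f + g) _ = _
    simp only [Pi.add_apply]
    ring
  map_smul' c f := by
    funext x
    show (c • f) _ + (c • f) _ = _
    simp only [Pi.smul_apply, RingHom.id_apply, smul_eq_mul]
    ring

lemma derivOp_eq_shiftOp_add_one {n : ℕ} (i : Fin n) :
    derivOp (n := n) i = shiftOp i + 1 :=
  LinearMap.ext fun _ => rfl

lemma shiftOp_comm {n : ℕ} (i j : Fin n) : Commute (shiftOp i) (shiftOp (n := n) j) := by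
  apply LinearMap.ext; intro f; funext x
  show f (x + Pi.single i 1 + Pi.single j 1) = f (x + Pi.single j 1 + Pi.single i 1)
  rw [add_right_comm]

lemma derivOp_comm {n : ℕ} (i j : Fin n) : Commute (derivOp i) (derivOp (n := n) j) := by
  rw [derivOp_eq_shiftOp_add_one, derivOp_eq_shiftOp_add_one]
  exact ((shiftOp_comm i j).add_right (Commute.one_right _)).add_left
    ((Commute.one_left _).add_right (Commute.one_right _))

/-- `∂^b = ∏_{i ∈ b} ∂_i`. -/
def derivPow {n : ℕ} (b : Finset (Fin n)) : Module.End (ZMod 2) (V n) :=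
  b.noncommProd derivOp (fun i _ j _ _ => derivOp_comm i j)

/-- `s^b = ∏_{i ∈ b} s_i`. -/
def shiftPow {n : ℕ} (b : Finset (Fin n)) : Module.End (ZMod 2) (V n) :=
  b.noncommProd shiftOp (fun i _ j _ _ => shiftOp_comm i j)

/-- The operator of multiplication by a function `g`. -/
noncomputable def mulOp {n : ℕ} (g : V n) : Module.End (ZMod 2) (V n) :=
  LinearMap.mulLeft (ZMod 2) g

/-- `X_i`: multiplication by the `i`-th coordinate function. -/
noncomputable def XOp {n : ℕ} (i : Fin n) : Module.End (ZMod 2) (V n) :=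
  mulOp (fun x => x i)

/-!
The operators `m^c s^(c ∆ d)`, with `m^c` the indicator of the point `c` and `s^e` the shift by
`e`, are the matrix units `f ↦ f(d) m^c` of `End M(Z_2^n, Z_2)`. Over `Z_2`,
`m^c = ∑_{a ⊇ c} x^a` (an interval `[c, t]` of the Boolean lattice has `2^|t \ c|` elements) and
`s^e = ∏_{i ∈ e} (∂_i + 1) = ∑_{b ⊆ e} ∂^b`. Hence the `4^n` operators `x^a ∂^b` span the
`4^n`-dimensional algebra `End M(Z_2^n, Z_2)`, so they form a basis of it; as each of them is a
product of generators `X_i` and `∂_i`, these generate everything.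
-/

open scoped symmDiff

section
variable {n : ℕ}

lemma mulOp_eq_lmul (g : V n) : mulOp g = Algebra.lmul (ZMod 2) (V n) g := rfl

lemma mulOp_apply (g f : V n) (x : Fin n → ZMod 2) : mulOp g f x = g x * f x := rfl

lemma zmod_two_eq_zero_or_one (y : ZMod 2) : y = 0 ∨ y = 1 := by
  revert y; decide

def supp (x : Fin n → ZMod 2) : Finset (Fin n) := univ.filter (fun i => x i = 1)

lemma mem_supp {x : Fin n → ZMod 2} {i : Fin n} : i ∈ supp x ↔ x i = 1 := by
  simp [supp]

lemma ind_supp (x : Fin n → ZMod 2) : ind (supp x) = x := by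
  funext i
  rcases zmod_two_eq_zero_or_one (x i) with h | h <;> simp [ind, mem_supp, h]

lemma supp_ind (a : Finset (Fin n)) : supp (ind a) = a := by
  ext i
  by_cases h : i ∈ a <;> simp [mem_supp, ind, h]

lemma eq_ind_iff {x : Fin n → ZMod 2} {a : Finset (Fin n)} : x = ind a ↔ supp x = a :=
  ⟨fun h => h ▸ supp_ind a, fun h => h ▸ (ind_supp x).symm⟩

lemma ind_empty : ind (∅ : Finset (Fin n)) = 0 := funext fun _ => if_neg (notMem_empty _)

lemma ind_insert {i : Fin n} {e : Finset (Fin n)} (h : i ∉ e) :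
    ind (insert i e) = Pi.single i 1 + ind e := by
  funext j
  by_cases hj : j = i
  · subst hj; simp [ind, h]
  · simp [ind, hj]

lemma ind_symmDiff (a b : Finset (Fin n)) : ind (a ∆ b) = ind a + ind b := by
  funext i
  by_cases ha : i ∈ a <;> by_cases hb : i ∈ b <;> simp [ind, Finset.mem_symmDiff, ha, hb]
  decide

lemma mFun_apply (c : Finset (Fin n)) (x : Fin n → ZMod 2) :
    mFun c x = if supp x = c then 1 else 0 := by
  simp [mFun, eq_ind_iff]

lemma xFun_apply (a : Finset (Fin n)) (x : Fin n → ZMod 2) :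
    xFun a x = if a ⊆ supp x then 1 else 0 := by
  simp [xFun, Finset.subset_iff, mem_supp]

lemma xFun_eq_prod (a : Finset (Fin n)) : xFun a = ∏ i ∈ a, fun x => x i := by
  funext x
  rw [Finset.prod_apply, xFun, Finset.prod_congr rfl (g := fun i => if x i = 1 then 1 else 0),
    Finset.prod_boole]
  · congr
  intro i _
  rcases zmod_two_eq_zero_or_one (x i) with h | h <;> simp [h]

lemma cast_card_Icc_finset_zmod_two {α : Type*} [DecidableEq α] {s t : Finset α} (h : s ⊆ t) :
    ((#(Icc s t) : ℕ) : ZMod 2) = if s = t then 1 else 0 := by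
  rw [card_Icc_finset h, Nat.cast_pow, Nat.cast_ofNat]
  split_ifs with hst
  · simp [hst]
  · have := card_lt_card (ssubset_of_subset_of_ne h hst)
    rw [show (2 : ZMod 2) = 0 from rfl, zero_pow (by omega)]

lemma mFun_eq_sum_xFun (c : Finset (Fin n)) : mFun c = ∑ a with c ⊆ a, xFun a := by
  funext x
  rw [Finset.sum_apply]
  simp only [xFun_apply]
  rw [Finset.sum_boole, Finset.filter_filter, mFun_apply]
  by_cases h : c ⊆ supp x
  · have hIcc : ({a | c ⊆ a ∧ a ⊆ supp x} : Finset _) = Icc c (supp x) := by ext; simp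
    rw [hIcc, cast_card_Icc_finset_zmod_two h]
    simp only [eq_comm]
  · have hne : supp x ≠ c := fun he => h (he ▸ subset_rfl)
    have hempty : ∀ a, ¬ (c ⊆ a ∧ a ⊆ supp x) := fun a ha => h (ha.1.trans ha.2)
    simp [hne, hempty]

lemma shiftPow_empty : shiftPow (∅ : Finset (Fin n)) = 1 := Finset.noncommProd_empty _ _

lemma derivPow_empty : derivPow (∅ : Finset (Fin n)) = 1 := Finset.noncommProd_empty _ _

lemma shiftPow_insert {i : Fin n} {e : Finset (Fin n)} (h : i ∉ e) :
    shiftPow (insert i e) = shiftOp i * shiftPow e :=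
  Finset.noncommProd_insert_of_notMem _ _ _ _ h

lemma derivPow_insert {i : Fin n} {b : Finset (Fin n)} (h : i ∉ b) :
    derivPow (insert i b) = derivOp i * derivPow b :=
  Finset.noncommProd_insert_of_notMem _ _ _ _ h

lemma shiftPow_apply (e : Finset (Fin n)) (f : V n) (x : Fin n → ZMod 2) :
    shiftPow e f x = f (x + ind e) := by
  induction e using Finset.induction_on generalizing x with
  | empty => rw [shiftPow_empty, ind_empty, add_zero]; rfl
  | insert i e hi ih =>
    rw [shiftPow_insert hi, Module.End.mul_apply]
    change shiftPow e f (x + Pi.single i 1) = _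
    rw [ih, ind_insert hi, add_assoc]

lemma shiftOp_eq_derivOp_add_one (i : Fin n) : shiftOp (n := n) i = derivOp i + 1 :=
  LinearMap.ext fun f => funext fun x => by
    change f (x + _) = f (x + _) + f x + f x
    rw [add_assoc, CharTwo.add_self_eq_zero, add_zero]

lemma shiftPow_eq_sum_derivPow (e : Finset (Fin n)) :
    shiftPow e = ∑ b ∈ e.powerset, derivPow b := by
  induction e using Finset.induction_on with
  | empty => simp [shiftPow_empty, derivPow_empty]
  | insert i e hi ih =>
    rw [shiftPow_insert hi, Finset.sum_powerset_insert hi, shiftOp_eq_derivOp_add_one, ih, add_mul,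
      one_mul, Finset.mul_sum, add_comm]
    congr 1
    refine Finset.sum_congr rfl fun b hb => (derivPow_insert ?_).symm
    exact fun hib => hi (Finset.mem_powerset.1 hb hib)

lemma mulOp_mFun_mul_shiftPow_symmDiff (c d : Finset (Fin n)) (f : V n) :
    (mulOp (mFun c) * shiftPow (c ∆ d)) f = f (ind d) • mFun c := by
  funext x
  rw [Module.End.mul_apply, mulOp_apply, shiftPow_apply, Pi.smul_apply, smul_eq_mul, mul_comm]
  by_cases h : x = ind c
  · rw [h, ← ind_symmDiff, symmDiff_symmDiff_cancel_left]
  · simp [mFun, h]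

lemma sum_smul_mFun (g : V n) : ∑ d, g (ind d) • mFun d = g := by
  funext x
  simp [Finset.sum_apply, mFun_apply, ind_supp]

lemma eq_sum_smul_mulOp_mFun_mul_shiftPow (T : Module.End (ZMod 2) (V n)) :
    T = ∑ p : Finset (Fin n) × Finset (Fin n),
      T (mFun p.2) (ind p.1) • (mulOp (mFun p.1) * shiftPow (p.1 ∆ p.2)) := by
  refine LinearMap.ext fun f => ?_
  calc T f = ∑ d, f (ind d) • T (mFun d) := by
        conv_lhs => rw [← sum_smul_mFun f]
        simp only [map_sum, map_smul]
    _ = ∑ d, ∑ c, f (ind d) • T (mFun d) (ind c) • mFun c := by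
        refine Finset.sum_congr rfl fun d _ => ?_
        rw [← Finset.smul_sum, sum_smul_mFun]
    _ = _ := by
        rw [LinearMap.sum_apply, Fintype.sum_prod_type, Finset.sum_comm]
        refine Finset.sum_congr rfl fun c _ => Finset.sum_congr rfl fun d _ => ?_
        rw [LinearMap.smul_apply, mulOp_mFun_mul_shiftPow_symmDiff, smul_comm]

lemma span_mulOp_xFun_mul_derivPow :
    Submodule.span (ZMod 2) (Set.range fun p : Finset (Fin n) × Finset (Fin n) =>
      mulOp (xFun p.1) * derivPow p.2) = ⊤ := by
  set S := Submodule.span (ZMod 2)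
    (Set.range fun p : Finset (Fin n) × Finset (Fin n) => mulOp (xFun p.1) * derivPow p.2)
  have hunit (c e : Finset (Fin n)) : mulOp (mFun c) * shiftPow e ∈ S := by
    rw [mFun_eq_sum_xFun, mulOp_eq_lmul, map_sum, shiftPow_eq_sum_derivPow, Finset.sum_mul_sum]
    exact Submodule.sum_mem _ fun a _ => Submodule.sum_mem _ fun b _ =>
      Submodule.subset_span ⟨(a, b), rfl⟩
  refine eq_top_iff.2 fun T _ => ?_
  rw [eq_sum_smul_mulOp_mFun_mul_shiftPow T]
  exact Submodule.sum_mem _ fun p _ => Submodule.smul_mem _ _ (hunit _ _)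

lemma finrank_end_V : Module.finrank (ZMod 2) (Module.End (ZMod 2) (V n)) = 2 ^ (2 * n) := by
  rw [Module.finrank_linearMap, Module.finrank_fintype_fun_eq_card]
  simp [ZMod.card, ← pow_add, two_mul]

end

section Adjoin
variable {n : ℕ} {A : Subalgebra (ZMod 2) (Module.End (ZMod 2) (V n))}

lemma mulOp_xFun_mem (hA : ∀ i, XOp i ∈ A) (a : Finset (Fin n)) : mulOp (xFun a) ∈ A :=
  show xFun a ∈ A.comap (Algebra.lmul (ZMod 2) (V n)) from
    xFun_eq_prod a ▸ Subalgebra.prod_mem _ fun i _ => hA i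

lemma derivPow_mem (hA : ∀ i, derivOp i ∈ A) (b : Finset (Fin n)) : derivPow b ∈ A :=
  Submonoid.noncommProd_mem A.toSubmonoid b derivOp _ fun i _ => hA i

lemma adjoin_XOp_derivOp_eq_top :
    Algebra.adjoin (ZMod 2) (Set.range (XOp (n := n)) ∪ Set.range derivOp) = ⊤ := by
  set A := Algebra.adjoin (ZMod 2) (Set.range (XOp (n := n)) ∪ Set.range derivOp)
  have hX (i : Fin n) : XOp i ∈ A := Algebra.subset_adjoin (Or.inl ⟨i, rfl⟩)
  have hD (i : Fin n) : derivOp i ∈ A := Algebra.subset_adjoin (Or.inr ⟨i, rfl⟩)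
  rw [← Algebra.toSubmodule_eq_top, eq_top_iff, ← span_mulOp_xFun_mul_derivPow, Submodule.span_le]
  rintro _ ⟨p, rfl⟩
  exact (Subalgebra.mem_toSubmodule A).2 (mul_mem (mulOp_xFun_mem hX p.1) (derivPow_mem hD p.2))

end Adjoin

/-- The operators `x^a ∂^b` are linearly independent over `Z_2`; hence the algebra
generated by the `X_i` and `∂_i` is the full endomorphism algebra of
`M(Z_2^n, Z_2)`, which has dimension `2^{2n}`. -/
theorem bdo_eq_full_end (n : ℕ) :
    LinearIndependent (ZMod 2)
      (fun p : Finset (Fin n) × Finset (Fin n) => mulOp (xFun p.1) * derivPow p.2) ∧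
    Algebra.adjoin (ZMod 2) (Set.range (XOp (n := n)) ∪ Set.range (derivOp (n := n))) = ⊤ ∧
    Module.finrank (ZMod 2) (Module.End (ZMod 2) (V n)) = 2 ^ (2 * n) := by
  have hcard : Fintype.card (Finset (Fin n) × Finset (Fin n)) =
      Module.finrank (ZMod 2) (Module.End (ZMod 2) (V n)) := by
    simp [finrank_end_V, two_mul, pow_add]
  exact ⟨linearIndependent_of_top_le_span_of_card_eq_finrank span_mulOp_xFun_mul_derivPow.ge hcard,
    adjoin_XOp_derivOp_eq_top, finrank_end_V⟩
end

section
/- Let f = Σ_{a ⊆ [n]} y^a be the sum of all Boolean derivative monomials, an operator on functions Z_2^n → Z_2. Then for k ≥ 2, f^k = f if k is odd and f^k = 1 (the identity operator) if k is even. -/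
open Finset

/-! Expanding the product `∏ i, (1 + ∂_i)` gives `f = ∑ a, ∂^a`. Over `ZMod 2`, `1 + ∂_i` is the
shift `s_i`, so `f` is the translation by the all-ones vector, an involution: `f ^ 2 = 1`. -/

open Function

theorem Pairwise.commute_one_add {ι R : Type*} [Semiring R] {g : ι → R}
    (hg : Pairwise (Commute on g)) : Pairwise (Commute on (1 + g)) :=
  fun _ _ hij => (Commute.one_right _).add_right ((Commute.one_left _).add_left (hg hij))

theorem Finset.sum_powerset_noncommProd {ι R : Type*} [Semiring R] {g : ι → R}
    (hg : Pairwise (Commute on g)) (s : Finset ι) :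
    ∑ a ∈ s.powerset, a.noncommProd g (hg.set_pairwise _) =
      s.noncommProd (1 + g) (hg.commute_one_add.set_pairwise _) := by
  classical
  induction s using Finset.induction_on with
  | empty =>
    rw [powerset_empty, sum_singleton, noncommProd_empty,
      noncommProd_empty]
  | @insert i s hi ih =>
    rw [sum_powerset_insert hi, noncommProd_insert_of_notMem _ _ _ _ hi, ← ih,
      Pi.add_apply, Pi.one_apply, add_mul, one_mul, mul_sum]
    congr 1
    refine sum_congr rfl fun a ha => ?_
    exact noncommProd_insert_of_notMem _ _ _ _ fun hia => hi (mem_powerset.1 ha hia)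

lemma one_add_derivOp {n : ℕ} (i : Fin n) : 1 + derivOp i = shiftOp (n := n) i := by
  refine LinearMap.ext fun f => funext fun x => ?_
  show f x + (f (x + Pi.single i 1) + f x) = f (x + Pi.single i 1)
  rw [add_comm, add_assoc, CharTwo.add_self_eq_zero, add_zero]

lemma sum_derivPow_eq_shiftPow_univ (n : ℕ) :
    ∑ a : Finset (Fin n), derivPow a = shiftPow univ := by
  rw [← powerset_univ]
  exact (Finset.sum_powerset_noncommProd (fun i j _ => derivOp_comm i j) _).trans
    (noncommProd_congr rfl (fun i _ => one_add_derivOp i) _)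

lemma shiftOp_mul_self {n : ℕ} (i : Fin n) : shiftOp i * shiftOp (n := n) i = 1 := by
  refine LinearMap.ext fun f => funext fun x => ?_
  show f (x + Pi.single i 1 + Pi.single i 1) = f x
  rw [add_assoc, ← Pi.single_add, CharTwo.add_self_eq_zero, Pi.single_zero, add_zero]

lemma shiftPow_sq {n : ℕ} (s : Finset (Fin n)) : shiftPow s ^ 2 = 1 := by
  have hcomm : (s : Set (Fin n)).Pairwise fun i j => Commute (shiftOp i) (shiftOp j) :=
    fun i _ j _ _ => shiftOp_comm i j
  rw [sq, shiftPow, ← noncommProd_mul_distrib shiftOp shiftOp hcomm hcomm hcomm,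
    noncommProd_eq_pow_card _ (shiftOp * shiftOp) _ 1 fun i _ => shiftOp_mul_self i, one_pow]

theorem sum_derivPow_pow_general (n : ℕ) (k : ℕ) :
    (Odd k → (∑ a : Finset (Fin n), derivPow a) ^ k = ∑ a : Finset (Fin n), derivPow a) ∧
    (Even k → (∑ a : Finset (Fin n), derivPow a) ^ k = 1) := by
  rw [sum_derivPow_eq_shiftPow_univ]
  constructor
  · rintro ⟨m, rfl⟩
    rw [pow_succ, pow_mul, shiftPow_sq, one_pow, one_mul]
  · rintro ⟨m, rfl⟩
    rw [← two_mul, pow_mul, shiftPow_sq, one_pow]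

/-- Let `f = Σ_{a ⊆ [n]} y^a` be the sum of all Boolean derivative monomials.
For `k ≥ 2`, `f^k = f` if `k` is odd and `f^k = 1` if `k` is even. -/
theorem sum_derivPow_pow (n : ℕ) (k : ℕ) (hk : 2 ≤ k) :
    (Odd k → (∑ a : Finset (Fin n), derivPow a) ^ k = ∑ a : Finset (Fin n), derivPow a) ∧
    (Even k → (∑ a : Finset (Fin n), derivPow a) ^ k = 1) :=
  sum_derivPow_pow_general n k
end
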